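/- Let t > 0, k a nonzero integer, λ = 4πk, and let W_t^{-λ}(x+iy, u+iv) = e^{-λ(u·y - v·x)} p_{2t}^{-λ}(2y,2v), where p_t^μ(x,u) = c_n μ^n (sinh(μt))^{-n} e^{-(μ/4)coth(μt)(|x|²+|u|²)}. Then for every entire function G with |G|² integrable against W_t^{-λ} over ℝ^{2n} × [0,1)^{2n} and every s ∈ ℤ^n, the operator (Π̃_k(s)G)(z,w) = e^{-iπ s·w} G(z+s/(2k), w) preserves the norm: ∫∫ |Π̃_k(s)G(x+iy,u+iv)|² W_t^{-λ}(x+iy,u+iv) dx du dy dv = ∫∫ |G(x+iy,u+iv)|² W_t^{-λ}(x+iy,u+iv) dx du dy dv, where the x,u integrals are over [0,1)^n and the y,v integrals over ℝ^n, and G satisfies the quasi-periodicity G(z+m,w+n) = e^{2πik(w·m - z·n)}G(z,w). -/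

import Mathlib

open scoped BigOperators Real
open MeasureTheory

noncomputable section

def dot {n : ℕ} (x u : Fin n → ℝ) : ℝ := ∑ i, x i * u i

def dotC {n : ℕ} (z w : Fin n → ℂ) : ℂ := ∑ i, z i * w i

/-- `z = x + iy ∈ ℂ^n` from real and imaginary parts. -/
def cplx {n : ℕ} (x y : Fin n → ℝ) : Fin n → ℂ := fun i => (x i : ℂ) + (y i : ℂ) * Complex.I

/-- The heat kernel factor `p_t^μ(x,u) = c_n μ^n (sinh(μt))^{-n} e^{-(μ/4)coth(μt)(|x|²+|u|²)}`. -/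
def pKer {n : ℕ} (c : ℝ) (t μ : ℝ) (x u : Fin n → ℝ) : ℝ :=
  c * μ ^ n / Real.sinh (μ * t) ^ n *
    Real.exp (-(μ / 4) * (Real.cosh (μ * t) / Real.sinh (μ * t)) * (dot x x + dot u u))

/-- The weight `W_t^{-λ}(x+iy,u+iv) = e^{-λ(u·y - v·x)} p_{2t}^{-λ}(2y,2v)`. -/
def weightW {n : ℕ} (c : ℝ) (t lam : ℝ) (x y u v : Fin n → ℝ) : ℝ :=
  Real.exp (-lam * (dot u y - dot v x)) *
    pKer c (2 * t) (-lam) (fun i => 2 * y i) (fun i => 2 * v i)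

/-- Quasi-periodicity `G(z+m, w+n) = e^{2πik(w·m - z·n)} G(z,w)`. -/
def QuasiPeriodic {n : ℕ} (k : ℤ) (G : (Fin n → ℂ) × (Fin n → ℂ) → ℂ) : Prop :=
  ∀ (m ν : Fin n → ℤ) (z w : Fin n → ℂ),
    G (z + fun i => ((m i : ℤ) : ℂ), w + fun i => ((ν i : ℤ) : ℂ)) =
      Complex.exp (2 * π * Complex.I * (k : ℝ) *
        (dotC w (fun i => ((m i : ℤ) : ℂ)) - dotC z (fun i => ((ν i : ℤ) : ℂ)))) * G (z, w)

/-- `(Π̃_k(s)G)(z,w) = e^{-iπ s·w} G(z+s/(2k), w)`. -/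
def PiTilde {n : ℕ} (k : ℤ) (s : Fin n → ℤ) (G : (Fin n → ℂ) × (Fin n → ℂ) → ℂ) :
    (Fin n → ℂ) × (Fin n → ℂ) → ℂ := fun p =>
  Complex.exp (-Complex.I * π * ∑ i, (s i : ℂ) * p.2 i) *
    G (p.1 + fun i => (s i : ℂ) / (2 * k), p.2)

def unitBox (n : ℕ) : Set (Fin n → ℝ) := Set.univ.pi fun _ => Set.Ico (0 : ℝ) 1

/-- The region `(y,v,x,u) ∈ ℝ^n × ℝ^n × [0,1)^n × [0,1)^n`. -/
def fundRegion (n : ℕ) :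
    Set ((Fin n → ℝ) × (Fin n → ℝ) × (Fin n → ℝ) × (Fin n → ℝ)) :=
  Set.univ ×ˢ Set.univ ×ˢ unitBox n ×ˢ unitBox n

/-! Since `|e^{-iπ s·w}|² = e^{2π s·v}` is exactly the factor by which `W_t^{-λ}` grows under
`x ↦ x + s/(2k)` (as `λ = 4πk`), the integrand for `Π̃_k(s)G` is the integrand for `G` translated
by `s/(2k)` in `x`. The translated region is again a fundamental domain for the integer lattice
acting on `(x, u)`, and quasi-periodicity makes `|G|² W_t^{-λ}` invariant under that lattice, so
its integrals over the two fundamental domains agree. -/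

open scoped Pointwise

lemma Complex.norm_exp_sq (z : ℂ) : ‖Complex.exp z‖ ^ 2 = Real.exp (2 * z.re) := by
  rw [Complex.norm_exp, ← Real.exp_nat_mul, Nat.cast_ofNat]

lemma AddSubgroup.existsUnique_vadd_mem_prod {A B : Type*} [AddGroup A] [AddGroup B]
    {G : AddSubgroup A} {H : AddSubgroup B} {s : Set A} {t : Set B}
    (hs : ∀ a, ∃! g : G, g +ᵥ a ∈ s) (ht : ∀ b, ∃! h : H, h +ᵥ b ∈ t) (p : A × B) :
    ∃! g : G.prod H, g +ᵥ p ∈ s ×ˢ t := by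
  obtain ⟨g, hg, hg_unique⟩ := hs p.1
  obtain ⟨h, hh, hh_unique⟩ := ht p.2
  refine ⟨⟨((g : A), (h : B)), g.2, h.2⟩, ⟨hg, hh⟩, ?_⟩
  rintro ⟨⟨g', h'⟩, hg', hh'⟩ ⟨hs', ht'⟩
  ext : 1
  exact Prod.ext (congrArg Subtype.val (hg_unique ⟨g', hg'⟩ hs'))
    (congrArg Subtype.val (hh_unique ⟨h', hh'⟩ ht'))

lemma AddSubgroup.existsUnique_bot_vadd_mem_univ {A : Type*} [AddGroup A] (a : A) :
    ∃! g : (⊥ : AddSubgroup A), g +ᵥ a ∈ Set.univ :=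
  ⟨0, trivial, fun _ _ => Subsingleton.elim _ _⟩

instance AddSubgroup.countable_prod {A B : Type*} [AddGroup A] [AddGroup B]
    (G : AddSubgroup A) (H : AddSubgroup B) [Countable G] [Countable H] :
    Countable (G.prod H) :=
  Countable.of_equiv _ (AddSubgroup.prodEquiv G H).symm.toEquiv

lemma dot_add_left {n : ℕ} (x x' u : Fin n → ℝ) : dot (x + x') u = dot x u + dot x' u := by
  simp [dot, add_mul, Finset.sum_add_distrib]

lemma dot_add_right {n : ℕ} (x u u' : Fin n → ℝ) : dot x (u + u') = dot x u + dot x u' := by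
  simp [dot, mul_add, Finset.sum_add_distrib]

lemma dot_comm {n : ℕ} (x u : Fin n → ℝ) : dot x u = dot u x := by
  simp [dot, mul_comm]

lemma cplx_add_left {n : ℕ} (x a y : Fin n → ℝ) :
    cplx (x + a) y = cplx x y + fun i => (a i : ℂ) := by
  funext i
  simp only [cplx, Pi.add_apply, Complex.ofReal_add]
  ring

lemma im_dotC_cplx_ofReal {n : ℕ} (u v a : Fin n → ℝ) :
    (dotC (cplx u v) fun i => (a i : ℂ)).im = dot v a := by
  simp [dotC, cplx, dot, Complex.im_sum]

lemma weightW_add {n : ℕ} (c t lam : ℝ) (x a y u b v : Fin n → ℝ) :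
    weightW c t lam (x + a) y (u + b) v =
      Real.exp (lam * (dot v a - dot b y)) * weightW c t lam x y u v := by
  rw [weightW, weightW, ← mul_assoc, ← Real.exp_add, dot_add_left, dot_add_right]
  ring_nf

abbrev PhaseSpace (n : ℕ) := (Fin n → ℝ) × (Fin n → ℝ) × (Fin n → ℝ) × (Fin n → ℝ)

-- Instance search does not see through the nested products of `volume`.
instance (n : ℕ) : (volume : Measure (PhaseSpace n)).IsAddLeftInvariant :=
  have : (volume : Measure ((Fin n → ℝ) × (Fin n → ℝ))).IsAddLeftInvariant :=
    Measure.prod.instIsAddLeftInvariant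
  have : (volume : Measure ((Fin n → ℝ) × (Fin n → ℝ) × (Fin n → ℝ))).IsAddLeftInvariant :=
    Measure.prod.instIsAddLeftInvariant
  Measure.prod.instIsAddLeftInvariant

def weightedNormSq {n : ℕ} (c t : ℝ) (k : ℤ) (G : (Fin n → ℂ) × (Fin n → ℂ) → ℂ)
    (p : PhaseSpace n) : ℝ :=
  ‖G (cplx p.2.2.1 p.1, cplx p.2.2.2 p.2.1)‖ ^ 2 *
    weightW c t (4 * π * k) p.2.2.1 p.1 p.2.2.2 p.2.1

lemma weightedNormSq_piTilde {n : ℕ} (c t : ℝ) {k : ℤ} (hk : k ≠ 0) (s : Fin n → ℤ)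
    (G : (Fin n → ℂ) × (Fin n → ℂ) → ℂ) (p : PhaseSpace n) :
    weightedNormSq c t k (PiTilde k s G) p =
      weightedNormSq c t k G (p + (0, 0, fun i => (s i : ℝ) / (2 * k), 0)) := by
  obtain ⟨y, v, x, u⟩ := p
  set a : Fin n → ℝ := fun i => (s i : ℝ) / (2 * k)
  have hshift : (cplx x y + fun i => (s i : ℂ) / (2 * k)) = cplx (x + a) y := by
    rw [cplx_add_left]
    simp [a]
  have hphase : ‖Complex.exp (-Complex.I * π * ∑ i, (s i : ℂ) * cplx u v i)‖ ^ 2 =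
      Real.exp (4 * π * k * dot v a) := by
    have hre : (-Complex.I * π * ∑ i, (s i : ℂ) * cplx u v i).re = π * ∑ i, s i * v i := by
      simp [cplx, Complex.re_sum, mul_add, ← mul_assoc, Finset.mul_sum]
    have hdot : 4 * π * k * dot v a = 2 * (π * ∑ i, s i * v i) := by
      have hk' : (k : ℝ) ≠ 0 := by exact_mod_cast hk
      simp only [dot, a, Finset.mul_sum]
      refine Finset.sum_congr rfl fun i _ => ?_
      field_simp
      ring
    rw [Complex.norm_exp_sq, hre, hdot]
  have hweight : weightW c t (4 * π * k) (x + a) y u v =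
      Real.exp (4 * π * k * dot v a) * weightW c t (4 * π * k) x y u v := by
    simpa [dot] using weightW_add c t (4 * π * k) x a y u 0 v
  simp only [weightedNormSq, PiTilde, Prod.mk_add_mk, add_zero, hshift]
  rw [norm_mul, mul_pow, hphase, hweight]
  ring

lemma QuasiPeriodic.norm_sq_add_intCast {n : ℕ} {k : ℤ} {G : (Fin n → ℂ) × (Fin n → ℂ) → ℂ}
    (hG : QuasiPeriodic k G) (m m' : Fin n → ℤ) (x y u v : Fin n → ℝ) :
    ‖G (cplx (x + fun i => (m i : ℝ)) y, cplx (u + fun i => (m' i : ℝ)) v)‖ ^ 2 =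
      Real.exp (-(4 * π * k) * (dot v (fun i => (m i : ℝ)) - dot (fun i => (m' i : ℝ)) y)) *
        ‖G (cplx x y, cplx u v)‖ ^ 2 := by
  have hcast (m : Fin n → ℤ) : (fun i => ((m i : ℝ) : ℂ)) = fun i => ((m i : ℤ) : ℂ) := by
    simp
  rw [cplx_add_left, cplx_add_left, hcast, hcast, hG, norm_mul, mul_pow, Complex.norm_exp_sq]
  congr 2
  have := im_dotC_cplx_ofReal u v fun i => (m i : ℝ)
  have := im_dotC_cplx_ofReal x y fun i => (m' i : ℝ)
  simp_all [Complex.mul_re, dot_comm y]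
  ring

def intVectors (n : ℕ) : AddSubgroup (Fin n → ℝ) :=
  (Submodule.span ℤ (Set.range (Pi.basisFun ℝ (Fin n)))).toAddSubgroup

instance (n : ℕ) : Countable (intVectors n) :=
  inferInstanceAs (Countable (Submodule.span ℤ (Set.range (Pi.basisFun ℝ (Fin n)))))

lemma exists_eq_intCast_of_mem_intVectors {n : ℕ} {a : Fin n → ℝ} (ha : a ∈ intVectors n) :
    ∃ m : Fin n → ℤ, a = fun i => (m i : ℝ) := by
  choose m hm using ((Pi.basisFun ℝ (Fin n)).mem_span_iff_repr_mem ℤ a).mp ha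
  exact ⟨m, funext fun i => by simpa using (hm i).symm⟩

lemma existsUnique_vadd_mem_unitBox {n : ℕ} (x : Fin n → ℝ) :
    ∃! g : intVectors n, g +ᵥ x ∈ unitBox n := by
  rw [unitBox, ← ZSpan.fundamentalDomain_pi_basisFun]
  exact ZSpan.exist_unique_vadd_mem_fundamentalDomain _ x

def fundLattice (n : ℕ) : AddSubgroup (PhaseSpace n) :=
  (⊥ : AddSubgroup (Fin n → ℝ)).prod ((⊥ : AddSubgroup (Fin n → ℝ)).prod
    ((intVectors n).prod (intVectors n)))

instance (n : ℕ) : Countable (fundLattice n) := by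
  unfold fundLattice
  infer_instance

lemma measurableSet_fundRegion (n : ℕ) : MeasurableSet (fundRegion n) :=
  have hbox : MeasurableSet (unitBox n) := .univ_pi fun _ => measurableSet_Ico
  MeasurableSet.univ.prod (MeasurableSet.univ.prod (hbox.prod hbox))

lemma isAddFundamentalDomain_fundRegion (n : ℕ) :
    IsAddFundamentalDomain (fundLattice n) (fundRegion n) volume := by
  open AddSubgroup in
  exact .mk' (measurableSet_fundRegion n).nullMeasurableSet
    (existsUnique_vadd_mem_prod existsUnique_bot_vadd_mem_univ
      (existsUnique_vadd_mem_prod existsUnique_bot_vadd_mem_univ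
        (existsUnique_vadd_mem_prod existsUnique_vadd_mem_unitBox existsUnique_vadd_mem_unitBox)))

lemma weightedNormSq_vadd {n : ℕ} (c t : ℝ) {k : ℤ} {G : (Fin n → ℂ) × (Fin n → ℂ) → ℂ}
    (hG : QuasiPeriodic k G) (g : fundLattice n) (p : PhaseSpace n) :
    weightedNormSq c t k G (g +ᵥ p) = weightedNormSq c t k G p := by
  obtain ⟨⟨g₁, g₂, a, b⟩, hg⟩ := g
  simp only [fundLattice, AddSubgroup.mem_prod, AddSubgroup.mem_bot] at hg
  obtain ⟨rfl, rfl, ha, hb⟩ := hg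
  obtain ⟨m, rfl⟩ := exists_eq_intCast_of_mem_intVectors ha
  obtain ⟨m', rfl⟩ := exists_eq_intCast_of_mem_intVectors hb
  obtain ⟨y, v, x, u⟩ := p
  simp only [weightedNormSq, AddSubgroup.vadd_def, vadd_eq_add, Prod.mk_add_mk, zero_add]
  rw [add_comm _ x, add_comm _ u, hG.norm_sq_add_intCast, weightW_add, mul_mul_mul_comm,
    ← Real.exp_add, neg_mul, neg_add_cancel, Real.exp_zero, one_mul]

theorem PiTilde_isometry_general {n : ℕ} (c t : ℝ) (k : ℤ) (hk : k ≠ 0)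
    (G : (Fin n → ℂ) × (Fin n → ℂ) → ℂ)
    (hG : QuasiPeriodic k G)
    (s : Fin n → ℤ) :
    (∫ p in fundRegion n,
        ‖PiTilde k s G (cplx p.2.2.1 p.1, cplx p.2.2.2 p.2.1)‖ ^ 2 *
          weightW c t (4 * π * k) p.2.2.1 p.1 p.2.2.2 p.2.1) =
      ∫ p in fundRegion n,
        ‖G (cplx p.2.2.1 p.1, cplx p.2.2.2 p.2.1)‖ ^ 2 *
          weightW c t (4 * π * k) p.2.2.1 p.1 p.2.2.2 p.2.1 := by
  set q : PhaseSpace n := (0, 0, fun i => (s i : ℝ) / (2 * k), 0)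
  change ∫ p in fundRegion n, weightedNormSq c t k (PiTilde k s G) p =
    ∫ p in fundRegion n, weightedNormSq c t k G p
  calc ∫ p in fundRegion n, weightedNormSq c t k (PiTilde k s G) p
      = ∫ p in fundRegion n, weightedNormSq c t k G (q +ᵥ p) := by
        congr 1 with p
        rw [weightedNormSq_piTilde c t hk, vadd_eq_add, add_comm]
    _ = ∫ p in q +ᵥ fundRegion n, weightedNormSq c t k G p := by
        rw [← Set.image_vadd]
        exact ((measurePreserving_vadd q volume).setIntegral_image_emb
          (measurableEmbedding_const_vadd q) _ _).symm
    _ = ∫ p in fundRegion n, weightedNormSq c t k G p :=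
        ((isAddFundamentalDomain_fundRegion n).vadd_of_comm q).setIntegral_eq
          (isAddFundamentalDomain_fundRegion n) (weightedNormSq_vadd c t hG)

/-- The operators `Π̃_k(s)` preserve the `𝓑_{t,Γ}^{4πk}`-norm: for every entire
quasi-periodic `G` with `|G|²` integrable against `W_t^{-λ}` over
`ℝ^{2n} × [0,1)^{2n}`, and every `s ∈ ℤ^n`,
`∫∫ |Π̃_k(s)G|² W_t^{-λ} = ∫∫ |G|² W_t^{-λ}` (with `λ = 4πk`). -/
theorem PiTilde_isometry {n : ℕ} (c t : ℝ) (ht : 0 < t) (k : ℤ) (hk : k ≠ 0)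
    (G : (Fin n → ℂ) × (Fin n → ℂ) → ℂ) (hGent : Differentiable ℂ G)
    (hG : QuasiPeriodic k G)
    (hInt : IntegrableOn
      (fun p : (Fin n → ℝ) × (Fin n → ℝ) × (Fin n → ℝ) × (Fin n → ℝ) =>
        ‖G (cplx p.2.2.1 p.1, cplx p.2.2.2 p.2.1)‖ ^ 2 *
          weightW c t (4 * π * k) p.2.2.1 p.1 p.2.2.2 p.2.1)
      (fundRegion n))
    (s : Fin n → ℤ) :
    (∫ p in fundRegion n,
        ‖PiTilde k s G (cplx p.2.2.1 p.1, cplx p.2.2.2 p.2.1)‖ ^ 2 *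
          weightW c t (4 * π * k) p.2.2.1 p.1 p.2.2.2 p.2.1) =
      ∫ p in fundRegion n,
        ‖G (cplx p.2.2.1 p.1, cplx p.2.2.2 p.2.1)‖ ^ 2 *
          weightW c t (4 * π * k) p.2.2.1 p.1 p.2.2.2 p.2.1 :=
  PiTilde_isometry_general c t k hk G hG s
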